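/- Assume Hypothesis (⋆). Let p be a prime, (x,y) an arc, E_x = ⟨O_p(G_{x,z}) : z ∈ Δ(x)⟩ and E_y = ⟨O_p(G_{z,y}) : z ∈ Δ(y)⟩. If E_x ⊄ G_x^{[1]} and E_y ≤ G_y^{[1]}, then G_{x,y}^{[1]} = G_x^{[2]} and G_y^{[2]} = G_y^{[3]}. -/

import Mathlib

open Equiv Subgroup

/-- `N` (a subgroup of `Perm V`) acts transitively on the neighbourhood of `x`. -/
def transOn {V : Type*} (Δ : SimpleGraph V) (N : Subgroup (Equiv.Perm V)) (x : V) : Prop :=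
  ∀ u ∈ Δ.neighborSet x, ∀ v ∈ Δ.neighborSet x, ∃ g ∈ N, g u = v

/-- The permutation group induced by `N` on the neighbourhood of `x` is semiregular. -/
def semiregOn {V : Type*} (Δ : SimpleGraph V) (N : Subgroup (Equiv.Perm V)) (x : V) : Prop :=
  ∀ g ∈ N, (∃ u ∈ Δ.neighborSet x, g u = u) → ∀ v ∈ Δ.neighborSet x, g v = v

/-- The stabiliser `G_x`. -/
def vstab {V : Type*} (G : Subgroup (Equiv.Perm V)) (x : V) : Subgroup (Equiv.Perm V) :=
  G ⊓ MulAction.stabilizer (Equiv.Perm V) x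

/-- `G_x^{[i]}`: pointwise stabiliser of the ball of radius `i` around `x`. -/
def ball {V : Type*} (Δ : SimpleGraph V) (G : Subgroup (Equiv.Perm V)) (x : V) (i : ℕ) :
    Subgroup (Equiv.Perm V) :=
  G ⊓ ⨅ z ∈ {z : V | Δ.dist x z ≤ i}, MulAction.stabilizer (Equiv.Perm V) z

/-- `K` is a normal subgroup of `H` (both subgroups of `Perm V`). -/
def normalIn {V : Type*} (K H : Subgroup (Equiv.Perm V)) : Prop :=
  K ≤ H ∧ ∀ h ∈ H, ∀ k ∈ K, h * k * h⁻¹ ∈ K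

/-- `O_p(H)`: the largest normal `p`-subgroup of `H`. -/
def Op {V : Type*} (p : ℕ) (H : Subgroup (Equiv.Perm V)) : Subgroup (Equiv.Perm V) :=
  sSup {K | normalIn K H ∧ IsPGroup p K}

/-- `E_x = ⟨O_p(G_{x,z}) : z ∈ Δ(x)⟩`. -/
def Ep {V : Type*} (Δ : SimpleGraph V) (G : Subgroup (Equiv.Perm V)) (p : ℕ) (x : V) :
    Subgroup (Equiv.Perm V) :=
  ⨆ z ∈ Δ.neighborSet x, Op p (vstab G x ⊓ vstab G z)

/-- `C_{G_x}(G_x^{[1]})`. -/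
def locCent {V : Type*} (Δ : SimpleGraph V) (G : Subgroup (Equiv.Perm V)) (x : V) :
    Subgroup (Equiv.Perm V) :=
  vstab G x ⊓ Subgroup.centralizer ((ball Δ G x 1 : Subgroup (Equiv.Perm V)) : Set (Equiv.Perm V))

/-- Hypothesis (⋆). -/
def StarHyp {V : Type*} (Δ : SimpleGraph V) (G : Subgroup (Equiv.Perm V)) : Prop :=
  ∀ x : V,
    transOn Δ (vstab G x) x ∧
    (transOn Δ (locCent Δ G x) x ∨ semiregOn Δ (locCent Δ G x) x) ∧
    ∀ p : ℕ, p.Prime → (transOn Δ (Ep Δ G p x) x ∨ semiregOn Δ (Ep Δ G p x) x)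

/-- `G` is a group of automorphisms of `Δ`. -/
def isAut {V : Type*} (Δ : SimpleGraph V) (G : Subgroup (Equiv.Perm V)) : Prop :=
  ∀ g ∈ G, ∀ u v : V, Δ.Adj (g u) (g v) ↔ Δ.Adj u v

/-- `K` is a subnormal subgroup of `H`. -/
def subnormalIn {V : Type*} (K H : Subgroup (Equiv.Perm V)) : Prop :=
  ∃ (n : ℕ) (c : ℕ → Subgroup (Equiv.Perm V)),
    c 0 = K ∧ c n = H ∧ ∀ i < n, normalIn (c i) (c (i + 1))

/-- `K` is quasisimple: perfect and simple modulo its centre. -/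
def IsQuasisimple {V : Type*} (K : Subgroup (Equiv.Perm V)) : Prop :=
  commutator ↥K = ⊤ ∧ IsSimpleGroup (↥K ⧸ Subgroup.center ↥K)

/-- `E(H)`: the layer, generated by the components of `H`. -/
def layer {V : Type*} (H : Subgroup (Equiv.Perm V)) : Subgroup (Equiv.Perm V) :=
  sSup {K | subnormalIn K H ∧ IsQuasisimple K}

/-- `F(H)`: the Fitting subgroup of `H`. -/
def fitting {V : Type*} (H : Subgroup (Equiv.Perm V)) : Subgroup (Equiv.Perm V) :=
  sSup {K | normalIn K H ∧ Group.IsNilpotent ↥K}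

/-- `F*(H) = E(H)F(H)`: the generalised Fitting subgroup of `H`. -/
def genFitting {V : Type*} (H : Subgroup (Equiv.Perm V)) : Subgroup (Equiv.Perm V) :=
  layer H ⊔ fitting H


/-!
Write `L = G_x^{[1]} ∩ G_y^{[1]}`. Since `E_x` does not fix `Δ(x)` pointwise, (⋆) forces `E_x` to be
transitive on `Δ(x)`. For `z ∈ Δ(x)`, the group `O_p(G_{x,z}) ∩ G_x^{[1]}` is a normal `p`-subgroup
of `G_x^{[1]}`, so it lies in `O_p(G_x^{[1]}) ≤ O_p(G_{x,y}) ≤ E_y ≤ G_y^{[1]}`. Hence for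
`q ∈ O_p(G_{x,z})` and `l ∈ L` the commutator `[q, l]` lies in `G_y^{[1]}`, so `E_x` normalises `L`.
Transitivity of `E_x` then moves `G_y^{[1]} ≥ L` onto every `G_z^{[1]}`, `z ∈ Δ(x)`, giving
`L = G_x^{[2]}`. Conjugating by `G_y`, which is transitive on `Δ(y)`, gives
`G_z^{[1]} ∩ G_y^{[1]} = G_z^{[2]}` for every `z ∈ Δ(y)`, and therefore `G_y^{[2]} = G_y^{[3]}`.
-/

open Pointwise

theorem IsPGroup.le_map_subtype_sylow {M : Type*} [Group M] {p : ℕ} {K H : Subgroup M}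
    (hK : IsPGroup p K) (hKH : K ≤ H) (hnorm : (K.subgroupOf H).Normal) (P : Sylow p H) :
    K ≤ (P : Subgroup H).map H.subtype := by
  rw [← map_subgroupOf_eq_of_le hKH]
  have hK' : IsPGroup p (K.subgroupOf H) := hK.comap_of_injective _ H.subtype_injective
  exact map_mono (hK'.le_sylow_of_normal P)

section PermGroups

variable {V : Type*}

section Op

variable {p : ℕ} {K H : Subgroup (Perm V)}

theorem normalIn.subgroupOf_normal (hKH : normalIn K H) : (K.subgroupOf H).Normal :=
  (normal_subgroupOf_iff hKH.1).mpr fun k h hk hh => hKH.2 h hh k hk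

theorem normalIn.smul (φ : MulAut (Perm V)) (hKH : normalIn K H) : normalIn (φ • K) (φ • H) := by
  refine ⟨pointwise_smul_le_pointwise_smul_iff.mpr hKH.1, fun h hh k hk => ?_⟩
  rw [mem_pointwise_smul_iff_inv_smul_mem] at hh hk ⊢
  simpa using hKH.2 _ hh _ hk

theorem normalIn.conj_smul_eq {h : Perm V} (hKH : normalIn K H) (hh : h ∈ H) :
    MulAut.conj h • K = K := by
  have hle : ∀ h ∈ H, MulAut.conj h • K ≤ K := by
    rintro h hh - ⟨k, hk, rfl⟩
    exact hKH.2 h hh k hk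
  refine (hle h hh).antisymm ?_
  rw [subset_pointwise_smul_iff, ← map_inv]
  exact hle _ (inv_mem hh)

theorem normalIn.of_le {H' : Subgroup (Perm V)} (hKH : normalIn K H) (hK : K ≤ H') (hH' : H' ≤ H) :
    normalIn K H' :=
  ⟨hK, fun h hh k hk => hKH.2 h (hH' hh) k hk⟩

theorem normalIn.inf_of_le {N : Subgroup (Perm V)} (hNH : normalIn N H) (hKH : K ≤ H) :
    normalIn (N ⊓ K) K :=
  ⟨inf_le_right, fun h hh k hk => mem_inf.mpr
    ⟨hNH.2 h (hKH hh) k (mem_inf.mp hk).1, mul_mem (mul_mem hh (mem_inf.mp hk).2) (inv_mem hh)⟩⟩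

theorem Op_le : Op p H ≤ H :=
  sSup_le fun _ hK => hK.1.1

theorem le_Op (hKH : normalIn K H) (hK : IsPGroup p K) : K ≤ Op p H :=
  le_sSup ⟨hKH, hK⟩

/-- Every normal `p`-subgroup lies in a fixed Sylow `p`-subgroup of `H`. -/
theorem isPGroup_Op [Finite V] (hp : p.Prime) : IsPGroup p (Op p H) := by
  have := Fact.mk hp
  obtain ⟨P⟩ : Nonempty (Sylow p H) := inferInstance
  refine (P.isPGroup'.map H.subtype).to_le (sSup_le fun K hK => ?_)
  exact hK.2.le_map_subtype_sylow hK.1.1 hK.1.subgroupOf_normal P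

theorem smul_Op_le (φ : MulAut (Perm V)) : φ • Op p H ≤ Op p (φ • H) := by
  rw [pointwise_smul_subset_iff]
  refine sSup_le fun K hK => ?_
  rw [subset_pointwise_smul_iff, inv_inv]
  exact le_Op (hK.1.smul φ) (hK.2.of_equiv (equivSMul φ K))

theorem smul_Op (φ : MulAut (Perm V)) : φ • Op p H = Op p (φ • H) := by
  refine (smul_Op_le φ).antisymm ?_
  rw [subset_pointwise_smul_iff]
  simpa using smul_Op_le (p := p) (H := φ • H) φ⁻¹

theorem conj_mem_Op {g q : Perm V} (hg : MulAut.conj g • H = H) (hq : q ∈ Op p H) :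
    g * q * g⁻¹ ∈ Op p H := by
  rw [← hg, ← smul_Op]
  exact smul_mem_pointwise_smul q (MulAut.conj g) _ hq

theorem Op_normalIn : normalIn (Op p H) H :=
  ⟨Op_le, fun _ hh _ hq => conj_mem_Op (conj_smul_eq_self_of_mem hh) hq⟩

theorem Op_le_Op_of_normalIn [Finite V] (hp : p.Prime) (hKH : normalIn K H) :
    Op p K ≤ Op p H :=
  le_Op ⟨Op_le.trans hKH.1, fun _ hh _ hq => conj_mem_Op (hKH.conj_smul_eq hh) hq⟩
    (isPGroup_Op hp)

end Op

section Graph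

variable {Δ : SimpleGraph V} {G : Subgroup (Perm V)} {a g : Perm V} {w x y z : V} {i p : ℕ}

theorem mem_vstab : a ∈ vstab G x ↔ a ∈ G ∧ a x = x := by
  simp [vstab, MulAction.mem_stabilizer_iff, Perm.smul_def]

theorem mem_ball : a ∈ ball Δ G x i ↔ a ∈ G ∧ ∀ z, Δ.dist x z ≤ i → a z = z := by
  simp [ball, mem_iInf, MulAction.mem_stabilizer_iff, Perm.smul_def]

theorem ball_anti {i j : ℕ} (hij : i ≤ j) : ball Δ G x j ≤ ball Δ G x i := fun _ ha =>
  mem_ball.mpr ⟨(mem_ball.mp ha).1, fun z hz => (mem_ball.mp ha).2 z (hz.trans hij)⟩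

theorem ball_le_vstab : ball Δ G x i ≤ vstab G x := fun _ ha =>
  mem_vstab.mpr ⟨(mem_ball.mp ha).1, (mem_ball.mp ha).2 x (by simp)⟩

theorem ball_one_le_vstab_of_adj (hxz : Δ.Adj x z) : ball Δ G x 1 ≤ vstab G z := fun _ ha =>
  mem_vstab.mpr
    ⟨(mem_ball.mp ha).1, (mem_ball.mp ha).2 z (SimpleGraph.dist_eq_one_iff_adj.mpr hxz).le⟩

theorem Op_le_Ep (hxz : Δ.Adj x z) : Op p (vstab G x ⊓ vstab G z) ≤ Ep Δ G p x :=
  le_iSup₂_of_le z hxz le_rfl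

theorem Ep_le_vstab : Ep Δ G p x ≤ vstab G x :=
  iSup₂_le fun _ _ => Op_le.trans inf_le_left

variable (hconn : Δ.Connected)
include hconn

theorem ball_zero : ball Δ G x 0 = vstab G x := by
  ext a
  simp [mem_ball, mem_vstab, hconn.dist_eq_zero_iff]

theorem ball_succ_le_ball_of_adj (hxz : Δ.Adj x z) : ball Δ G x (i + 1) ≤ ball Δ G z i :=
  fun _ ha => mem_ball.mpr ⟨(mem_ball.mp ha).1, fun w hw => (mem_ball.mp ha).2 w <| by
    have := hconn.dist_triangle (u := x) (v := z) (w := w)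
    have := SimpleGraph.dist_eq_one_iff_adj.mpr hxz
    omega⟩

theorem eq_or_exists_adj_dist_le (hw : Δ.dist x w ≤ i + 1) :
    w = x ∨ ∃ z, Δ.Adj x z ∧ Δ.dist z w ≤ i := by
  obtain ⟨q, hq⟩ := hconn.exists_walk_length_eq_dist x w
  cases q with
  | nil => exact Or.inl rfl
  | cons hxz q =>
    rw [SimpleGraph.Walk.length_cons] at hq
    exact Or.inr ⟨_, hxz, (SimpleGraph.dist_le q).trans (by omega)⟩

theorem le_ball_succ {K : Subgroup (Perm V)} (hx : K ≤ vstab G x)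
    (hnbr : ∀ z, Δ.Adj x z → K ≤ ball Δ G z i) : K ≤ ball Δ G x (i + 1) := by
  intro a ha
  refine mem_ball.mpr ⟨(mem_vstab.mp (hx ha)).1, fun w hw => ?_⟩
  rcases eq_or_exists_adj_dist_le hconn hw with rfl | ⟨z, hxz, hzw⟩
  · exact (mem_vstab.mp (hx ha)).2
  · exact (mem_ball.mp (hnbr z hxz ha)).2 w hzw

theorem isAut.dist_apply (hG : isAut Δ G) (hg : g ∈ G) (u v : V) :
    Δ.dist (g u) (g v) = Δ.dist u v := by
  have hle : ∀ g ∈ G, ∀ u v, Δ.dist (g u) (g v) ≤ Δ.dist u v := by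
    intro g hg u v
    obtain ⟨q, hq⟩ := hconn.exists_walk_length_eq_dist u v
    let f : Δ →g Δ := ⟨g, (hG g hg _ _).mpr⟩
    calc Δ.dist (g u) (g v) ≤ (q.map f).length := SimpleGraph.dist_le _
      _ = Δ.dist u v := by simp [hq]
  refine (hle g hg u v).antisymm ?_
  simpa using hle g⁻¹ (inv_mem hg) (g u) (g v)

theorem isAut.conj_smul_ball (hG : isAut Δ G) (hg : g ∈ G) :
    MulAut.conj g • ball Δ G x i = ball Δ G (g x) i := by
  ext a
  simp only [mem_pointwise_smul_iff_inv_smul_mem, MulAut.smul_def, MulAut.inv_apply,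
    MulAut.conj_symm_apply, mem_ball, mul_mem_cancel_right hg, mul_mem_cancel_left (inv_mem hg),
    Perm.coe_mul, Perm.coe_inv, Function.comp_apply, symm_apply_eq, and_congr_right_iff]
  refine fun _ => Iff.trans ?_ (Equiv.forall_congr_right (e := g))
  simp only [hG.dist_apply hconn hg]

theorem Ep_le_ball_one_of_semiregOn (hsr : semiregOn Δ (Ep Δ G p x) x) :
    Ep Δ G p x ≤ ball Δ G x 1 := by
  refine iSup₂_le fun w hxw => le_ball_succ hconn (Op_le.trans inf_le_left) fun z hxz => ?_
  rw [ball_zero hconn]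
  intro q hq
  obtain ⟨hqx, hqw⟩ := mem_inf.mp (Op_le hq)
  exact mem_vstab.mpr ⟨(mem_vstab.mp hqx).1,
    hsr q (Op_le_Ep hxw hq) ⟨w, hxw, (mem_vstab.mp hqw).2⟩ z hxz⟩

theorem transOn_Ep (hstar : StarHyp Δ G) (hp : p.Prime) (hEx : ¬ Ep Δ G p x ≤ ball Δ G x 1) :
    transOn Δ (Ep Δ G p x) x :=
  ((hstar x).2.2 p hp).resolve_right fun hsr => hEx (Ep_le_ball_one_of_semiregOn hconn hsr)

variable (hG : isAut Δ G)
include hG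

theorem normalIn_ball_vstab : normalIn (ball Δ G x i) (vstab G x) := by
  refine ⟨ball_le_vstab, fun h hh l hl => ?_⟩
  have hl' : h * l * h⁻¹ ∈ MulAut.conj h • ball Δ G x i := smul_mem_pointwise_smul l _ _ hl
  rwa [hG.conj_smul_ball hconn (mem_vstab.mp hh).1, (mem_vstab.mp hh).2] at hl'

theorem Op_inf_ball_one_le_ball_one [Finite V] (hp : p.Prime) (hxy : Δ.Adj x y)
    (hEy : Ep Δ G p y ≤ ball Δ G y 1) (hxz : Δ.Adj x z) :
    Op p (vstab G x ⊓ vstab G z) ⊓ ball Δ G x 1 ≤ ball Δ G y 1 :=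
  calc _ ≤ Op p (ball Δ G x 1) :=
        le_Op (Op_normalIn.inf_of_le (le_inf ball_le_vstab (ball_one_le_vstab_of_adj hxz)))
          ((isPGroup_Op hp).to_le inf_le_left)
    _ ≤ Op p (vstab G y ⊓ vstab G x) :=
        Op_le_Op_of_normalIn hp ((normalIn_ball_vstab hconn hG).of_le
          (le_inf (ball_one_le_vstab_of_adj hxy) ball_le_vstab) inf_le_right)
    _ ≤ Ep Δ G p y := Op_le_Ep hxy.symm
    _ ≤ ball Δ G y 1 := hEy

theorem Ep_le_normalizer_ball_one_inf [Finite V]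
    (hT : ∀ z, Δ.Adj x z → Op p (vstab G x ⊓ vstab G z) ⊓ ball Δ G x 1 ≤ ball Δ G y 1) :
    Ep Δ G p x ≤ normalizer ((ball Δ G x 1 ⊓ ball Δ G y 1 : Subgroup _) : Set (Perm V)) := by
  refine iSup₂_le fun z hxz q hq => mem_normalizer_fintype fun l hl => ?_
  obtain ⟨hlx, hly⟩ := mem_inf.mp hl
  have hqlx : q * l * q⁻¹ ∈ ball Δ G x 1 :=
    (normalIn_ball_vstab hconn hG).2 q (mem_inf.mp (Op_le hq)).1 l hlx
  have hcomm : q * l * q⁻¹ * l⁻¹ ∈ ball Δ G y 1 := by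
    refine hT z hxz (mem_inf.mpr ⟨?_, mul_mem hqlx (inv_mem hlx)⟩)
    have := Op_normalIn.2 l (le_inf ball_le_vstab (ball_one_le_vstab_of_adj hxz) hlx) _ (inv_mem hq)
    simpa [mul_assoc] using mul_mem hq this
  exact mem_inf.mpr ⟨hqlx, by simpa using mul_mem hcomm hly⟩

theorem ball_one_inf_le_ball_one_of_transOn (htrans : transOn Δ (Ep Δ G p x) x)
    (hN : Ep Δ G p x ≤ normalizer ((ball Δ G x 1 ⊓ ball Δ G y 1 : Subgroup _) : Set (Perm V)))
    (hxy : Δ.Adj x y) (hxz : Δ.Adj x z) : ball Δ G x 1 ⊓ ball Δ G y 1 ≤ ball Δ G z 1 := by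
  obtain ⟨e, he, rfl⟩ := htrans y hxy z hxz
  intro l hl
  have hl' := (mem_inf.mp ((mem_normalizer_iff.mp (hN (inv_mem he)) l).mp hl)).2
  rw [← hG.conj_smul_ball hconn (mem_vstab.mp (Ep_le_vstab he)).1,
    mem_pointwise_smul_iff_inv_smul_mem]
  simpa using hl'

theorem ball_one_inf_ball_one_eq_ball_two [Finite V] (hstar : StarHyp Δ G) (hp : p.Prime)
    (hxy : Δ.Adj x y) (hEx : ¬ Ep Δ G p x ≤ ball Δ G x 1) (hEy : Ep Δ G p y ≤ ball Δ G y 1) :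
    ball Δ G x 1 ⊓ ball Δ G y 1 = ball Δ G x 2 := by
  have hN := Ep_le_normalizer_ball_one_inf hconn hG fun z hxz =>
    Op_inf_ball_one_le_ball_one hconn hG hp hxy hEy hxz
  refine le_antisymm ?_ (le_inf (ball_anti (by norm_num)) (ball_succ_le_ball_of_adj hconn hxy))
  exact le_ball_succ hconn (inf_le_left.trans ball_le_vstab) fun z hxz =>
    ball_one_inf_le_ball_one_of_transOn hconn hG (transOn_Ep hconn hstar hp hEx) hN hxy hxz

end Graph

end PermGroups

theorem stmt10 {V : Type*} [Fintype V] (Δ : SimpleGraph V) (G : Subgroup (Equiv.Perm V))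
    (hconn : Δ.Connected) (hG : isAut Δ G) (hstar : StarHyp Δ G)
    (p : ℕ) (hp : p.Prime) {x y : V} (hxy : Δ.Adj x y)
    (hEx : ¬ Ep Δ G p x ≤ ball Δ G x 1) (hEy : Ep Δ G p y ≤ ball Δ G y 1) :
    ball Δ G x 1 ⊓ ball Δ G y 1 = ball Δ G x 2 ∧ ball Δ G y 2 = ball Δ G y 3 := by
  have hL := ball_one_inf_ball_one_eq_ball_two hconn hG hstar hp hxy hEx hEy
  refine ⟨hL, le_antisymm ?_ (ball_anti (by norm_num))⟩
  refine le_ball_succ hconn ball_le_vstab fun z hyz => ?_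
  obtain ⟨g, hg, rfl⟩ := (hstar y).1 x hxy.symm z hyz
  obtain ⟨hgG, hgy⟩ := mem_vstab.mp hg
  have hL' := congrArg (MulAut.conj g • ·) hL
  simp only [smul_inf, hG.conj_smul_ball hconn hgG, hgy] at hL'
  calc ball Δ G y 2 ≤ ball Δ G (g x) 1 ⊓ ball Δ G y 1 :=
        le_inf (ball_succ_le_ball_of_adj hconn hyz) (ball_anti (by norm_num))
    _ = ball Δ G (g x) 2 := hL'
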